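/- Under the assumptions of the previous statement (T a cutter with I − T closed at 0, F satisfying the coercivity Condition, step sizes ρ_k → 0 with Σρ_k = ∞, relaxations α_k ∈ [μ, 2−μ]), any sequence {x^k} generated by the algorithm x^{k+1} = P_{α_k}(z^k) satisfies lim_{k→∞} dist(x^k, Fix(T)) = 0 and lim_{k→∞} ‖x^{k+1} − x^k‖ = 0. -/

import Mathlib

/-
Since `T` is a cutter, `Fix T` lies in every half-space `H_k`, so the relaxed projection step
is Fejér monotone with respect to `Fix T` up to the perturbation `‖z^k - x^k‖ ≤ ρ_k`; with
`d k = dist(x^k, Fix T)` this gives `d (k+1)² + μ(2-μ)‖P z^k - z^k‖² ≤ (d k + ρ_k)²`.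
Coercivity makes the step from `x^k` to `z^k` non-expansive towards `q` outside `E` as soon as
`ρ_k ≤ 2β`, so the iterates stay bounded. On a bounded set, closedness of `I - T` at `0` and
compactness bound `‖T x - x‖` from below away from `Fix T`; since `‖T x^k - x^k‖` is at most
`‖P z^k - z^k‖ + ρ_k`, `d` drops by a fixed amount whenever `d k ≥ ε`, and `ρ_k → 0` then
forces `d k → 0`. Finally `‖x^{k+1} - x^k‖ ≤ 3ρ_k + 2 d k`.
-/

open Classical
open scoped RealInnerProductSpace

open Filter Topology Metric

theorem bddAbove_range_of_eventually_le_max {α : Type*} [LinearOrder α] {r : ℕ → α} {M : α}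
    (h : ∀ᶠ k in atTop, r (k + 1) ≤ max (r k) M) : BddAbove (Set.range r) := by
  obtain ⟨K, hK⟩ := eventually_atTop.1 h
  refine (isBoundedUnder_of_eventually_le (a := max (r K) M) ?_).bddAbove_range
  refine eventually_atTop.2 ⟨K, fun k hk => ?_⟩
  induction k, hk using Nat.le_induction with
  | base => exact le_max_left _ _
  | succ k hk ih => exact (hK k hk).trans (max_le ih (le_max_right _ _))

theorem frequently_lt_of_eventually_le_sub {D : ℕ → ℝ} {ε δ : ℝ} (hD : ∀ k, 0 ≤ D k)
    (hδ : 0 < δ) (h : ∀ᶠ k in atTop, ε ≤ D k → D (k + 1) ≤ D k - δ) :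
    ∃ᶠ k in atTop, D k < ε := by
  by_contra! hfar
  obtain ⟨K, hK⟩ := eventually_atTop.1 (h.and hfar)
  have hdrop : ∀ m : ℕ, D (K + m) ≤ D K - m * δ := by
    intro m
    induction m with
    | zero => simp
    | succ m ih =>
      have hm := hK (K + m) (Nat.le_add_right _ _)
      rw [← add_assoc]
      push_cast
      linarith [hm.1 hm.2]
  obtain ⟨m, hm⟩ := exists_nat_gt (D K / δ)
  rw [div_lt_iff₀ hδ] at hm
  linarith [hdrop m, hD (K + m)]

theorem tendsto_zero_of_le_add_of_eventually_le_sub {D ρ : ℕ → ℝ} (hD : ∀ k, 0 ≤ D k)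
    (hρ : Tendsto ρ atTop (𝓝 0)) (hstep : ∀ k, D (k + 1) ≤ D k + ρ k)
    (hdec : ∀ ε > 0, ∃ δ > 0, ∀ᶠ k in atTop, ε ≤ D k → D (k + 1) ≤ D k - δ) :
    Tendsto D atTop (𝓝 0) := by
  refine tendsto_order.2 ⟨fun a ha => Eventually.of_forall fun k => ha.trans_le (hD k),
    fun ε hε => ?_⟩
  obtain ⟨δ, hδ, hdec⟩ := hdec (ε / 2) (half_pos hε)
  have hsmall := hdec.and (hρ.eventually (gt_mem_nhds (half_pos hε)))
  obtain ⟨K, hK⟩ := eventually_atTop.1 hsmall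
  obtain ⟨k₀, hk₀K, hk₀⟩ := (frequently_lt_of_eventually_le_sub hD hδ hdec).forall_exists_of_atTop K
  refine eventually_atTop.2 ⟨k₀, fun k hk => ?_⟩
  induction k, hk using Nat.le_induction with
  | base => linarith
  | succ k hk ih =>
    obtain ⟨hkdec, hkρ⟩ := hK k (hk₀K.trans hk)
    -- below `ε / 2` the sequence rises by less than `ε / 2`; above it, it decreases
    rcases lt_or_ge (D k) (ε / 2) with hlt | hge
    · linarith [hstep k]
    · linarith [hkdec hge]

theorem tendsto_zero_of_sq_add_le_sq {D d ρ : ℕ → ℝ} {c C : ℝ} (hc : 0 < c)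
    (hD : ∀ k, 0 ≤ D k) (hDC : ∀ k, D k ≤ C) (hρ : Tendsto ρ atTop (𝓝 0)) (hρ0 : ∀ k, 0 ≤ ρ k)
    (hstep : ∀ k, D (k + 1) ^ 2 + c * d k ^ 2 ≤ (D k + ρ k) ^ 2)
    (hd : ∀ ε > 0, ∃ γ > 0, ∀ k, ε ≤ D k → γ ≤ d k + ρ k) :
    Tendsto D atTop (𝓝 0) := by
  set C' := max C 1
  have hC' : 0 < C' := zero_lt_one.trans_le (le_max_right _ _)
  have hDC' : ∀ k, D k ≤ C' := fun k => (hDC k).trans (le_max_left _ _)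
  refine tendsto_zero_of_le_add_of_eventually_le_sub hD hρ (fun k => ?_) fun ε hε => ?_
  · exact le_of_sq_le_sq (by nlinarith [hstep k, sq_nonneg (d k)])
      (add_nonneg (hD k) (hρ0 k))
  obtain ⟨γ, hγ, hγd⟩ := hd ε hε
  set η := c * γ ^ 2 / 8
  have hη : 0 < η := by positivity
  have hρ_err : Tendsto (fun k => ρ k * (2 * C' + ρ k)) atTop (𝓝 0) := by
    simpa using hρ.mul (tendsto_const_nhds.add hρ)
  refine ⟨η / (2 * C'), by positivity, ?_⟩
  filter_upwards [hρ.eventually (ge_mem_nhds (half_pos hγ)),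
    hρ_err.eventually (ge_mem_nhds hη)] with k hργ hρerr hεk
  have hdk : γ / 2 ≤ d k := by linarith [hγd k hεk]
  have hsq : D (k + 1) ^ 2 ≤ D k ^ 2 - η := by
    have hexp : (D k + ρ k) ^ 2 ≤ D k ^ 2 + ρ k * (2 * C' + ρ k) := by
      nlinarith [hDC' k, hρ0 k]
    have hcd : 2 * η ≤ c * d k ^ 2 := by
      have := mul_le_mul_of_nonneg_left (pow_le_pow_left₀ (by positivity) hdk 2) hc.le
      linarith [show c * (γ / 2) ^ 2 = 2 * η by ring]
    linarith [hstep k]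
  -- `(D k - D (k + 1)) * (D k + D (k + 1)) ≥ η` and `D k + D (k + 1) ≤ 2 * C'`
  rw [le_sub_iff_add_le, ← le_sub_iff_add_le', div_le_iff₀ (by positivity)]
  nlinarith [hDC' k, hDC' (k + 1), hD k, hD (k + 1)]

section Demiclosed

variable {V : Type*} [NormedAddCommGroup V]

def SubIdClosedAtZero (T : V → V) : Prop :=
  ∀ (u : ℕ → V) (y : V), Tendsto u atTop (𝓝 y) →
    Tendsto (fun k => ‖T (u k) - u k‖) atTop (𝓝 0) → T y = y

theorem SubIdClosedAtZero.isClosed_setOf_apply_eq {T : V → V} (hT : SubIdClosedAtZero T) :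
    IsClosed {x | T x = x} := by
  refine isClosed_of_closure_subset fun y hy => ?_
  obtain ⟨u, hu_fix, hlim⟩ := mem_closure_iff_seq_limit.1 hy
  refine hT u y hlim ?_
  simp only [show ∀ k, T (u k) = u k from hu_fix, sub_self, norm_zero, tendsto_const_nhds]

theorem SubIdClosedAtZero.exists_pos_le_norm_sub_of_le_infDist [ProperSpace V] {T : V → V}
    (hT : SubIdClosedAtZero T) (c : V) (C : ℝ) {ε : ℝ} (hε : 0 < ε) :
    ∃ γ > 0, ∀ y ∈ closedBall c C, ε ≤ infDist y {x | T x = x} → γ ≤ ‖T y - y‖ := by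
  by_contra! hcon
  choose u hu_mem hu_far hu_small using fun j : ℕ => hcon (1 / (j + 1)) Nat.one_div_pos_of_nat
  obtain ⟨y, -, φ, hφ, hlim⟩ := (isCompact_closedBall c C).tendsto_subseq hu_mem
  have hsmall : Tendsto (fun j => ‖T (u (φ j)) - u (φ j)‖) atTop (𝓝 0) :=
    squeeze_zero (fun _ => norm_nonneg _) (fun j => (hu_small (φ j)).le)
      (tendsto_one_div_add_atTop_nhds_zero_nat.comp hφ.tendsto_atTop)
  have hfar : ε ≤ infDist y {x | T x = x} :=
    ge_of_tendsto (((continuous_infDist_pt _).tendsto y).comp hlim)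
      (Eventually.of_forall fun j => hu_far (φ j))
  rw [infDist_zero_of_mem (show y ∈ {x | T x = x} from hT _ y hlim hsmall)] at hfar
  exact hfar.not_gt hε

end Demiclosed

section Geometry

variable {H : Type*} [NormedAddCommGroup H] [InnerProductSpace ℝ H]

theorem norm_relaxed_proj_sub_sq_le {z p w : H} {a : ℝ} (ha : 0 ≤ a)
    (hw : ⟪z - p, w - p⟫ ≤ 0) :
    ‖z + a • (p - z) - w‖ ^ 2 ≤ ‖z - w‖ ^ 2 - a * (2 - a) * ‖p - z‖ ^ 2 := by
  have hinner : ⟪z - w, p - z⟫ = ⟪z - p, w - p⟫ - ‖p - z‖ ^ 2 := by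
    rw [← real_inner_self_eq_norm_sq]
    simp only [inner_sub_left, inner_sub_right, real_inner_comm]
    ring
  rw [show z + a • (p - z) - w = (z - w) + a • (p - z) by abel, norm_add_sq_real,
    real_inner_smul_right, norm_smul, Real.norm_eq_abs, abs_of_nonneg ha, mul_pow,
    hinner]
  nlinarith [mul_nonneg ha (sq_nonneg ‖p - z‖)]

theorem norm_proj_sub_le {z p w : H} (hw : ⟪z - p, w - p⟫ ≤ 0) : ‖p - z‖ ≤ ‖z - w‖ := by
  have h := norm_relaxed_proj_sub_sq_le zero_le_one hw
  refine le_of_sq_le_sq ?_ (norm_nonneg _)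
  nlinarith [sq_nonneg ‖z + (1 : ℝ) • (p - z) - w‖]

theorem norm_relaxed_proj_sub_le {z p w : H} {a : ℝ} (ha : 0 ≤ a) (ha2 : a ≤ 2)
    (hw : ⟪z - p, w - p⟫ ≤ 0) : ‖z + a • (p - z) - w‖ ≤ ‖z - w‖ := by
  refine le_of_sq_le_sq ?_ (norm_nonneg _)
  nlinarith [norm_relaxed_proj_sub_sq_le ha hw, mul_nonneg (mul_nonneg ha (sub_nonneg.2 ha2))
    (sq_nonneg ‖p - z‖)]

theorem norm_sub_le_of_inner_sub_nonpos {x t p : H} (hp : ⟪p - t, x - t⟫ ≤ 0) :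
    ‖x - t‖ ≤ ‖x - p‖ := by
  refine le_of_sq_le_sq ?_ (norm_nonneg _)
  have hx : ‖x - p‖ ^ 2 = ‖x - t‖ ^ 2 - 2 * ⟪x - t, p - t⟫ + ‖p - t‖ ^ 2 := by
    rw [← norm_sub_sq_real, sub_sub_sub_cancel_right]
  rw [hx, real_inner_comm]
  nlinarith [sq_nonneg ‖p - t‖]

theorem norm_sub_le_norm_proj_sub_add {x z t p : H} {ρ : ℝ} (hp : ⟪p - t, x - t⟫ ≤ 0)
    (hzx : ‖z - x‖ ≤ ρ) : ‖t - x‖ ≤ ‖p - z‖ + ρ := by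
  rw [norm_sub_rev]
  linarith [norm_sub_le_of_inner_sub_nonpos hp, norm_sub_le_norm_sub_add_norm_sub x z p,
    norm_sub_rev x z, norm_sub_rev z p]

theorem norm_div_norm_smul_le (v : H) {ρ : ℝ} (hρ : 0 ≤ ρ) : ‖(ρ / ‖v‖) • v‖ ≤ ρ := by
  rcases eq_or_ne v 0 with rfl | hv
  · simpa using hρ
  · rw [norm_smul, Real.norm_eq_abs, abs_of_nonneg (by positivity),
      div_mul_cancel₀ _ (norm_ne_zero_iff.2 hv)]

theorem norm_sub_div_norm_smul_sub_le {x q v : H} {β ρ : ℝ} (hv : β * ‖v‖ ≤ ⟪v, x - q⟫)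
    (hρ : 0 ≤ ρ) (hρβ : ρ ≤ 2 * β) : ‖x - (ρ / ‖v‖) • v - q‖ ≤ ‖x - q‖ := by
  rcases eq_or_ne v 0 with rfl | hv0
  · simp
  have hnorm : 0 < ‖v‖ := norm_pos_iff.2 hv0
  refine le_of_sq_le_sq ?_ (norm_nonneg _)
  have htv : ρ / ‖v‖ * ‖v‖ = ρ := div_mul_cancel₀ _ hnorm.ne'
  have hinner : β * ρ ≤ ρ / ‖v‖ * ⟪v, x - q⟫ := by
    calc β * ρ = ρ / ‖v‖ * (β * ‖v‖) := by rw [mul_left_comm, htv]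
      _ ≤ ρ / ‖v‖ * ⟪v, x - q⟫ := by gcongr
  rw [sub_right_comm, norm_sub_sq_real, real_inner_smul_right, norm_smul, Real.norm_eq_abs,
    abs_of_nonneg (by positivity), htv, real_inner_comm]
  nlinarith

theorem sq_infDist_relaxed_proj_add_le {S : Set H} {x z p w : H} {a c ρ : ℝ} (hw : w ∈ S)
    (hxw : infDist x S = dist x w) (hzx : ‖z - x‖ ≤ ρ) (hp : ∀ u ∈ S, ⟪z - p, u - p⟫ ≤ 0)
    (ha : 0 ≤ a) (hc : c ≤ a * (2 - a)) :
    infDist (z + a • (p - z)) S ^ 2 + c * ‖p - z‖ ^ 2 ≤ (infDist x S + ρ) ^ 2 := by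
  have hzw : ‖z - w‖ ≤ infDist x S + ρ := by
    rw [hxw, dist_eq_norm]
    linarith [norm_sub_le_norm_sub_add_norm_sub z x w]
  have hnext : infDist (z + a • (p - z)) S ≤ ‖z + a • (p - z) - w‖ := by
    rw [← dist_eq_norm]; exact infDist_le_dist_of_mem hw
  have hrelax := norm_relaxed_proj_sub_sq_le ha (hp w hw)
  nlinarith [pow_le_pow_left₀ infDist_nonneg hnext 2, pow_le_pow_left₀ (norm_nonneg _) hzw 2,
    mul_le_mul_of_nonneg_right hc (sq_nonneg ‖p - z‖)]

theorem norm_relaxed_proj_sub_le_infDist {S : Set H} {x z p w : H} {a ρ : ℝ} (hw : w ∈ S)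
    (hxw : infDist x S = dist x w) (hzx : ‖z - x‖ ≤ ρ) (hp : ∀ u ∈ S, ⟪z - p, u - p⟫ ≤ 0)
    (ha : 0 ≤ a) (ha2 : a ≤ 2) : ‖z + a • (p - z) - x‖ ≤ 3 * ρ + 2 * infDist x S := by
  have hpz : ‖p - z‖ ≤ infDist x S + ρ := by
    rw [hxw, dist_eq_norm]
    linarith [norm_proj_sub_le (hp w hw), norm_sub_le_norm_sub_add_norm_sub z x w]
  calc ‖z + a • (p - z) - x‖ ≤ ‖z - x‖ + a * ‖p - z‖ := by
        rw [add_sub_right_comm]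
        exact (norm_add_le _ _).trans_eq (by rw [norm_smul, Real.norm_of_nonneg ha])
    _ ≤ 3 * ρ + 2 * infDist x S := by nlinarith [norm_nonneg (p - z)]

theorem bddAbove_range_norm_sub_of_coercive {F : H → H} {x : ℕ → H} {q : H} {β : ℝ}
    {ρ : ℕ → ℝ} {E : Set H} (hE : Bornology.IsBounded E) (hβ : 0 < β)
    (hcoerc : ∀ y ∉ E, β * ‖F y‖ ≤ ⟪F y, y - q⟫) (hρ : Tendsto ρ atTop (𝓝 0))
    (hρ0 : ∀ k, 0 ≤ ρ k)
    (hstep : ∀ k, ‖x (k + 1) - q‖ ≤ ‖x k - (ρ k / ‖F (x k)‖) • F (x k) - q‖) :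
    BddAbove (Set.range fun k => ‖x k - q‖) := by
  obtain ⟨R, hR⟩ := hE.subset_closedBall q
  refine bddAbove_range_of_eventually_le_max (M := R + 1) ?_
  filter_upwards [hρ.eventually (ge_mem_nhds (mul_pos two_pos hβ)),
    hρ.eventually (ge_mem_nhds one_pos)] with k hρβ hρ1
  refine (hstep k).trans ?_
  by_cases hxE : x k ∈ E
  · have hxR : ‖x k - q‖ ≤ R := by simpa [dist_eq_norm] using hR hxE
    refine le_max_of_le_right ?_
    rw [sub_right_comm]
    linarith [norm_sub_le (x k - q) ((ρ k / ‖F (x k)‖) • F (x k)),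
      norm_div_norm_smul_le (F (x k)) (hρ0 k)]
  · exact le_max_of_le_left (norm_sub_div_norm_smul_sub_le (hcoerc _ hxE) (hρ0 k) hρβ)

end Geometry

theorem stmt_18_general (n : ℕ) (T F : EuclideanSpace ℝ (Fin n) → EuclideanSpace ℝ (Fin n))
    (hcut : ∀ x : EuclideanSpace ℝ (Fin n), ∀ w ∈ {x | T x = x},
      ⟪T x - x, T x - w⟫ ≤ 0)
    (hclosed : ∀ (u : ℕ → EuclideanSpace ℝ (Fin n)) (y : EuclideanSpace ℝ (Fin n)),
      Filter.Tendsto u Filter.atTop (nhds y) →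
      Filter.Tendsto (fun k => ‖T (u k) - u k‖) Filter.atTop (nhds 0) →
      T y = y)
    (μ : ℝ) (hμ : μ ∈ Set.Ioo (0 : ℝ) 1)
    (α : ℕ → ℝ) (hα : ∀ k, α k ∈ Set.Icc μ (2 - μ))
    (ρ : ℕ → ℝ) (hρpos : ∀ k, 0 < ρ k)
    (hρ0 : Filter.Tendsto ρ Filter.atTop (nhds 0))
    (q : EuclideanSpace ℝ (Fin n)) (hq : T q = q) (β : ℝ) (hβ : 0 < β)
    (E : Set (EuclideanSpace ℝ (Fin n))) (hE : Bornology.IsBounded E)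
    (hcoerc : ∀ x ∉ E, ⟪F x, x - q⟫ ≥ β * ‖F x‖)
    (x z : ℕ → EuclideanSpace ℝ (Fin n))
    (P : ℕ → EuclideanSpace ℝ (Fin n) → EuclideanSpace ℝ (Fin n))
    (hP : ∀ k y, P k y ∈ {u | ⟪u - T (x k), x k - T (x k)⟫ ≤ 0} ∧
      ∀ u ∈ {u | ⟪u - T (x k), x k - T (x k)⟫ ≤ 0}, ⟪y - P k y, u - P k y⟫ ≤ 0)
    (hz : ∀ k, z k = if F (x k) ≠ 0 then x k - (ρ k / ‖F (x k)‖) • F (x k) else x k)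
    (hiter : ∀ k, x (k + 1) = z k + α k • (P k (z k) - z k)) :
    Filter.Tendsto (fun k => Metric.infDist (x k) {x | T x = x}) Filter.atTop (nhds 0) ∧
    Filter.Tendsto (fun k => ‖x (k + 1) - x k‖) Filter.atTop (nhds 0) := by
  set S := {x : EuclideanSpace ℝ (Fin n) | T x = x}
  have hqS : q ∈ S := hq
  have hα0 : ∀ k, 0 ≤ α k := fun k => hμ.1.le.trans (hα k).1
  have hα2 : ∀ k, α k ≤ 2 := fun k => by linarith [(hα k).2, hμ.1]
  have hrelax : ∀ k, μ * (2 - μ) ≤ α k * (2 - α k) := fun k => by nlinarith [(hα k).1, (hα k).2]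
  -- `(ρ / ‖0‖) • 0 = 0`, so both branches of the definition of `z k` agree
  have hz' : ∀ k, z k = x k - (ρ k / ‖F (x k)‖) • F (x k) := fun k => by
    rw [hz k]
    split_ifs with hF
    · rfl
    · simp [not_not.1 hF]
  have hzx : ∀ k, ‖z k - x k‖ ≤ ρ k := fun k => by
    simpa [hz' k] using norm_div_norm_smul_le (F (x k)) (hρpos k).le
  -- the cutter property says exactly that `Fix T` lies in the half-space `H_k`
  have hproj : ∀ k, ∀ w ∈ S, ⟪z k - P k (z k), w - P k (z k)⟫ ≤ 0 := fun k w hw => by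
    refine (hP k (z k)).2 w ?_
    change ⟪w - T (x k), x k - T (x k)⟫ ≤ 0
    rw [← inner_neg_neg, neg_sub, neg_sub, real_inner_comm]
    exact hcut (x k) w hw
  have hnear : ∀ k, ∃ w ∈ S, infDist (x k) S = dist (x k) w := fun k =>
    (SubIdClosedAtZero.isClosed_setOf_apply_eq hclosed).exists_infDist_eq_dist ⟨q, hq⟩ (x k)
  obtain ⟨C, hC⟩ := bddAbove_range_norm_sub_of_coercive (x := x) hE hβ hcoerc hρ0
    (fun k => (hρpos k).le) fun k => by
      rw [hiter k, ← hz' k]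
      exact norm_relaxed_proj_sub_le (hα0 k) (hα2 k) (hproj k q hqS)
  have hxC : ∀ k, ‖x k - q‖ ≤ C := fun k => hC ⟨k, rfl⟩
  have hD : Tendsto (fun k => infDist (x k) S) atTop (𝓝 0) := by
    refine tendsto_zero_of_sq_add_le_sq (d := fun k => ‖P k (z k) - z k‖) (c := μ * (2 - μ))
      (mul_pos hμ.1 (by linarith [hμ.2])) (fun k => infDist_nonneg)
      (fun k => (infDist_le_dist_of_mem hqS).trans ((dist_eq_norm _ _).trans_le (hxC k))) hρ0
      (fun k => (hρpos k).le) (fun k => ?_) fun ε hε => ?_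
    · obtain ⟨w, hw, hxw⟩ := hnear k
      rw [hiter k]
      exact sq_infDist_relaxed_proj_add_le hw hxw (hzx k) (hproj k) (hα0 k) (hrelax k)
    · obtain ⟨γ, hγ, hγT⟩ :=
        SubIdClosedAtZero.exists_pos_le_norm_sub_of_le_infDist (T := T) hclosed q C hε
      exact ⟨γ, hγ, fun k hk => (hγT (x k) (mem_closedBall_iff_norm.2 (hxC k)) hk).trans
        (norm_sub_le_norm_proj_sub_add (hP k (z k)).1 (hzx k))⟩
  refine ⟨hD, squeeze_zero (fun _ => norm_nonneg _) (fun k => ?_)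
    (by simpa using (hρ0.const_mul 3).add (hD.const_mul 2))⟩
  obtain ⟨w, hw, hxw⟩ := hnear k
  rw [hiter k]
  exact norm_relaxed_proj_sub_le_infDist hw hxw (hzx k) (hproj k) (hα0 k) (hα2 k)

theorem stmt_18 (n : ℕ) (T F : EuclideanSpace ℝ (Fin n) → EuclideanSpace ℝ (Fin n))
    (hFix : {x | T x = x}.Nonempty)
    (hcut : ∀ x : EuclideanSpace ℝ (Fin n), ∀ w ∈ {x | T x = x},
      ⟪T x - x, T x - w⟫ ≤ 0)
    (hclosed : ∀ (u : ℕ → EuclideanSpace ℝ (Fin n)) (y : EuclideanSpace ℝ (Fin n)),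
      Filter.Tendsto u Filter.atTop (nhds y) →
      Filter.Tendsto (fun k => ‖T (u k) - u k‖) Filter.atTop (nhds 0) →
      T y = y)
    (μ : ℝ) (hμ : μ ∈ Set.Ioo (0 : ℝ) 1)
    (α : ℕ → ℝ) (hα : ∀ k, α k ∈ Set.Icc μ (2 - μ))
    (ρ : ℕ → ℝ) (hρpos : ∀ k, 0 < ρ k)
    (hρ0 : Filter.Tendsto ρ Filter.atTop (nhds 0))
    (hρsum : ¬ Summable ρ)
    (q : EuclideanSpace ℝ (Fin n)) (hq : T q = q) (β : ℝ) (hβ : 0 < β)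
    (E : Set (EuclideanSpace ℝ (Fin n))) (hE : Bornology.IsBounded E)
    (hcoerc : ∀ x ∉ E, ⟪F x, x - q⟫ ≥ β * ‖F x‖)
    (x z : ℕ → EuclideanSpace ℝ (Fin n))
    (P : ℕ → EuclideanSpace ℝ (Fin n) → EuclideanSpace ℝ (Fin n))
    (hP : ∀ k y, P k y ∈ {u | ⟪u - T (x k), x k - T (x k)⟫ ≤ 0} ∧
      ∀ u ∈ {u | ⟪u - T (x k), x k - T (x k)⟫ ≤ 0}, ⟪y - P k y, u - P k y⟫ ≤ 0)
    (hz : ∀ k, z k = if F (x k) ≠ 0 then x k - (ρ k / ‖F (x k)‖) • F (x k) else x k)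
    (hiter : ∀ k, x (k + 1) = z k + α k • (P k (z k) - z k)) :
    Filter.Tendsto (fun k => Metric.infDist (x k) {x | T x = x}) Filter.atTop (nhds 0) ∧
    Filter.Tendsto (fun k => ‖x (k + 1) - x k‖) Filter.atTop (nhds 0) :=
  stmt_18_general n T F hcut hclosed μ hμ α hα ρ hρpos hρ0 q hq β hβ E hE hcoerc x z P hP hz hiter
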